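/- Fix A > 0 and 0 < ε < 1/7. Let Y be the 2N×2N block-diagonal matrix with j-th 2×2 block c_j·J₀, where |c_j| ≤ A for each j, and define ω(ξ,ζ) = dλ(ξ,ζ) + ⟨Y·ξ^h, ζ^h⟩ on ℝ^{4N}. Let J be a linear map on ℝ^{4N} with J² = −Id that is compatible with dλ and satisfies ‖J − 𝕁_A‖ < ε in the operator norm. Then J is uniformly tamed by ω: for every nonzero ξ ∈ ℝ^{4N}, ω(Jξ, ξ) > (1/4)·dλ(Jξ, ξ) (in particular ω(Jξ,ξ) > 0). -/

import Mathlib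

open Real
open scoped RealInnerProductSpace

noncomputable section

/-- Configuration space ℝ^{2N}: coordinate `(j, s)` is the `s`-th coordinate of the
`j`-th particle, with the Euclidean norm. -/
abbrev Conf (N : ℕ) := EuclideanSpace ℝ (Fin N × Fin 2)

/-- Phase space ℝ^{4N} = ℝ^{2N} ⊕ ℝ^{2N} (horizontal ⊕ vertical), with the Euclidean norm. -/
abbrev Phase (N : ℕ) := WithLp 2 (Conf N × Conf N)

/-- The horizontal part `ξ^h`. -/
def hpart {N : ℕ} (ξ : Phase N) : Conf N := (WithLp.equiv 2 (Conf N × Conf N) ξ).1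

/-- The vertical part `ξ^v`. -/
def vpart {N : ℕ} (ξ : Phase N) : Conf N := (WithLp.equiv 2 (Conf N × Conf N) ξ).2

/-- The standard symplectic form `dλ(ξ,ζ) = ⟨ξ^v, ζ^h⟩ − ⟨ξ^h, ζ^v⟩`. -/
def dlam {N : ℕ} (ξ ζ : Phase N) : ℝ := ⟪vpart ξ, hpart ζ⟫ - ⟪hpart ξ, vpart ζ⟫

/-- The rescaled complex structure `𝕁_A(ξ^h, ξ^v) = (−ξ^v/A, A·ξ^h)`. -/
def JA (N : ℕ) (A : ℝ) : Phase N →L[ℝ] Phase N :=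
  ((WithLp.prodContinuousLinearEquiv 2 ℝ (Conf N) (Conf N)).symm :
      (Conf N × Conf N) ≃L[ℝ] Phase N).toContinuousLinearMap ∘L
  (((-(A⁻¹)) • (ContinuousLinearMap.snd ℝ (Conf N) (Conf N))).prod
    (A • (ContinuousLinearMap.fst ℝ (Conf N) (Conf N)))) ∘L
  ((WithLp.prodContinuousLinearEquiv 2 ℝ (Conf N) (Conf N)) :
      Phase N ≃L[ℝ] (Conf N × Conf N)).toContinuousLinearMap

/-- The block-diagonal matrix `Y` with `j`-th 2×2 block `c_j·J₀`, acting on ℝ^{2N}. -/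
def rotAct {N : ℕ} (c : Fin N → ℝ) (v : Conf N) : Conf N :=
  WithLp.toLp 2 fun i => if i.2 = (0 : Fin 2) then -(c i.1) * v (i.1, 1) else (c i.1) * v (i.1, 0)

/-!
The form `g = dλ(J·,·)` is an inner product. Put `x₁ = ξ^h`, `x₂ = (Jξ)^h` and
`vlift x = (0, x)`. The vector `w = -J (vlift x₁) - vlift x₂` satisfies
`g(w, ξ) = |x₁|² + |x₂|²`, and since the vertical subspace is Lagrangian,
`g(w, w) = g(vlift x₁, vlift x₁) + g(vlift x₂, vlift x₂)`. Closeness of `J` to `𝕁_A` gives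
`A · g(vlift x, vlift x) ≤ (1 + ε + ε²)|x|²`, so Cauchy–Schwarz for `g` yields
`A (|x₁|² + |x₂|²) ≤ (1 + ε + ε²) dλ(Jξ, ξ)`. As `|⟨Y x₂, x₁⟩| ≤ (A/2)(|x₁|² + |x₂|²)` and
`1 + ε + ε² < 3/2`, the term `⟨Y x₂, x₁⟩` exceeds `-(3/4) dλ(Jξ, ξ)`.
-/

section PhaseSpace

variable {N : ℕ}

@[simp] lemma hpart_add (u v : Phase N) : hpart (u + v) = hpart u + hpart v := rfl
@[simp] lemma vpart_add (u v : Phase N) : vpart (u + v) = vpart u + vpart v := rfl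
@[simp] lemma hpart_sub (u v : Phase N) : hpart (u - v) = hpart u - hpart v := rfl
@[simp] lemma vpart_sub (u v : Phase N) : vpart (u - v) = vpart u - vpart v := rfl
@[simp] lemma vpart_neg (u : Phase N) : vpart (-u) = -vpart u := rfl
@[simp] lemma hpart_smul (r : ℝ) (u : Phase N) : hpart (r • u) = r • hpart u := rfl
@[simp] lemma vpart_smul (r : ℝ) (u : Phase N) : vpart (r • u) = r • vpart u := rfl

@[simp] lemma hpart_JA (A : ℝ) (u : Phase N) : hpart (JA N A u) = -A⁻¹ • vpart u := rfl
@[simp] lemma vpart_JA (A : ℝ) (u : Phase N) : vpart (JA N A u) = A • hpart u := rfl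

lemma norm_hpart_le (u : Phase N) : ‖hpart u‖ ≤ ‖u‖ := WithLp.norm_fst_le _ u
lemma norm_vpart_le (u : Phase N) : ‖vpart u‖ ≤ ‖u‖ := WithLp.norm_snd_le _ u

def vlift (x : Conf N) : Phase N := WithLp.toLp 2 (0, x)

@[simp] lemma hpart_vlift (x : Conf N) : hpart (vlift x) = 0 := rfl
@[simp] lemma vpart_vlift (x : Conf N) : vpart (vlift x) = x := rfl
@[simp] lemma norm_vlift (x : Conf N) : ‖vlift x‖ = ‖x‖ := WithLp.norm_toLp_snd 2 _ _ x

lemma dlam_comm (u v : Phase N) : dlam u v = -dlam v u := by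
  simp only [dlam, real_inner_comm]; ring

variable (N) in
def dlamForm : LinearMap.BilinForm ℝ (Phase N) :=
  LinearMap.mk₂ ℝ dlam
    (fun u v w => by simp only [dlam, hpart_add, vpart_add, inner_add_left]; ring)
    (fun r u v => by
      simp only [dlam, hpart_smul, vpart_smul, real_inner_smul_left, smul_eq_mul]; ring)
    (fun u v w => by simp only [dlam, hpart_add, vpart_add, inner_add_right]; ring)
    (fun r u v => by
      simp only [dlam, hpart_smul, vpart_smul, real_inner_smul_right, smul_eq_mul]; ring)

@[simp] lemma dlamForm_apply (u v : Phase N) : dlamForm N u v = dlam u v := rfl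

lemma dlam_vlift_left (x : Conf N) (u : Phase N) : dlam (vlift x) u = ⟪x, hpart u⟫ := by
  simp [dlam]

lemma dlam_vlift_right (u : Phase N) (x : Conf N) : dlam u (vlift x) = -⟪hpart u, x⟫ := by
  simp [dlam]

@[simp] lemma dlam_vlift_vlift (x y : Conf N) : dlam (vlift x) (vlift y) = 0 := by
  simp [dlam]

end PhaseSpace

section Rotation

variable {N : ℕ} {A : ℝ} {c : Fin N → ℝ}

lemma norm_rotAct_le (hA : 0 ≤ A) (hc : ∀ j, |c j| ≤ A) (v : Conf N) :
    ‖rotAct c v‖ ≤ A * ‖v‖ := by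
  refine (sq_le_sq₀ (norm_nonneg _) (by positivity)).1 ?_
  rw [mul_pow]
  simp only [EuclideanSpace.real_norm_sq_eq, Finset.mul_sum, Fintype.sum_prod_type,
    Fin.sum_univ_two]
  refine Finset.sum_le_sum fun j _ => ?_
  have hcj : c j ^ 2 ≤ A ^ 2 := sq_le_sq' (abs_le.mp (hc j)).1 (abs_le.mp (hc j)).2
  simp only [rotAct, PiLp.toLp_apply, Fin.isValue, ↓reduceIte, one_ne_zero, neg_mul, even_two,
    Even.neg_pow]
  nlinarith [sq_nonneg (v (j, 0)), sq_nonneg (v (j, 1))]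

lemma neg_le_inner_rotAct (hA : 0 ≤ A) (hc : ∀ j, |c j| ≤ A) (v w : Conf N) :
    -(A / 2 * (‖v‖ ^ 2 + ‖w‖ ^ 2)) ≤ ⟪rotAct c v, w⟫ :=
  calc -(A / 2 * (‖v‖ ^ 2 + ‖w‖ ^ 2)) ≤ -(A * ‖v‖ * ‖w‖) := by
        nlinarith [two_mul_le_add_sq ‖v‖ ‖w‖]
    _ ≤ -(‖rotAct c v‖ * ‖w‖) := by gcongr; exact norm_rotAct_le hA hc v
    _ ≤ ⟪rotAct c v, w⟫ := neg_le_of_abs_le (abs_real_inner_le_norm _ _)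

end Rotation

section Compatible

variable {N : ℕ} {J : Phase N →L[ℝ] Phase N}

variable (J) in
def metricForm : LinearMap.BilinForm ℝ (Phase N) :=
  dlamForm N ∘ₗ (J : Phase N →ₗ[ℝ] Phase N)

@[simp] lemma metricForm_apply (u v : Phase N) : metricForm J u v = dlam (J u) v := rfl

lemma sq_sum_norm_hpart_sq_le (hJ2 : ∀ ξ, J (J ξ) = -ξ)
    (hsymm : ∀ ξ ζ, dlam (J ξ) ζ = dlam (J ζ) ξ) (hpos : ∀ ξ, 0 ≤ dlam (J ξ) ξ) (ξ : Phase N) :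
    (‖hpart ξ‖ ^ 2 + ‖hpart (J ξ)‖ ^ 2) ^ 2 ≤
      (dlam (J (vlift (hpart ξ))) (vlift (hpart ξ)) +
        dlam (J (vlift (hpart (J ξ)))) (vlift (hpart (J ξ)))) * dlam (J ξ) ξ := by
  set g := metricForm J
  set a := vlift (hpart ξ)
  set b := vlift (hpart (J ξ))
  set w := -J a - b
  have hgJ : ∀ u v, g (J u) v = -dlam u v := fun u v => by
    rw [metricForm_apply, hJ2, ← dlamForm_apply, map_neg]; rfl
  have hwξ : g w ξ = ‖hpart ξ‖ ^ 2 + ‖hpart (J ξ)‖ ^ 2 := by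
    have hbξ : g b ξ = dlam (J ξ) b := hsymm b ξ
    simp only [w, map_sub, map_neg, LinearMap.sub_apply, LinearMap.neg_apply, hgJ, hbξ,
      a, b, dlam_vlift_left, dlam_vlift_right, real_inner_self_eq_norm_sq]
    ring
  have hξw : g ξ w = g w ξ := hsymm ξ w
  have hww : g w w = g a a + g b b := by
    have hbJa : g b (J a) = g (J a) b := hsymm b (J a)
    have hJaa : g (J a) (J a) = g a a := by rw [hgJ, dlam_comm, metricForm_apply, neg_neg]
    simp only [w, map_sub, map_neg, LinearMap.sub_apply, LinearMap.neg_apply, hbJa, hJaa, hgJ,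
      a, b, dlam_vlift_vlift]
    ring
  have := g.apply_mul_apply_le_of_forall_zero_le hpos w ξ
  rw [hξw, hwξ, hww, ← sq] at this
  exact this

end Compatible

section Perturbation

variable {N : ℕ} {A ε : ℝ} {J : Phase N →L[ℝ] Phase N}

lemma JA_vlift (A : ℝ) (x : Conf N) : JA N A (vlift x) = WithLp.toLp 2 (-A⁻¹ • x, 0) := by
  simp [JA, vlift]

lemma norm_JA_vlift (hA : 0 < A) (x : Conf N) : ‖JA N A (vlift x)‖ = A⁻¹ * ‖x‖ := by
  rw [JA_vlift, WithLp.norm_toLp_fst, norm_smul, norm_neg, Real.norm_of_nonneg (by positivity)]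

lemma norm_sub_JA_apply_le (hJ : ‖J - JA N A‖ ≤ ε) (u : Phase N) :
    ‖J u - JA N A u‖ ≤ ε * ‖u‖ :=
  ((J - JA N A).le_opNorm u).trans (mul_le_mul_of_nonneg_right hJ (norm_nonneg u))

lemma norm_apply_vlift_le (hA : 0 < A) (hJ : ‖J - JA N A‖ ≤ ε) (x : Conf N) :
    ‖J (vlift x)‖ ≤ (A⁻¹ + ε) * ‖x‖ := by
  have h := norm_sub_JA_apply_le hJ (vlift x)
  have h' := norm_sub_norm_le (J (vlift x)) (JA N A (vlift x))
  rw [norm_vlift] at h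
  rw [norm_JA_vlift hA] at h'
  linarith

lemma mul_norm_hpart_apply_vlift_le_of_le_one (hA : 0 < A) (hA1 : A ≤ 1) (hε : 0 ≤ ε)
    (hJ : ‖J - JA N A‖ ≤ ε) (x : Conf N) :
    A * ‖hpart (J (vlift x))‖ ≤ (1 + ε) * ‖x‖ := by
  have h : ‖hpart (J (vlift x)) - -A⁻¹ • x‖ ≤ ε * ‖x‖ := by
    simpa using (norm_hpart_le _).trans (norm_sub_JA_apply_le hJ (vlift x))
  have h' := norm_le_norm_add_norm_sub' (hpart (J (vlift x))) (-A⁻¹ • x)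
  rw [norm_smul, norm_neg, Real.norm_of_nonneg (by positivity)] at h'
  calc A * ‖hpart (J (vlift x))‖ ≤ A * ((A⁻¹ + ε) * ‖x‖) := by gcongr; linarith
    _ = (1 + A * ε) * ‖x‖ := by field_simp
    _ ≤ (1 + ε) * ‖x‖ := by gcongr; nlinarith

/-- For `A ≥ 1` the direct estimate loses a factor `A`; instead use `J² = -1`: the vertical
part of `J (J (vlift x)) = -vlift x` is close to `A • hpart (J (vlift x))`. -/
lemma mul_norm_hpart_apply_vlift_le_of_one_le (hA1 : 1 ≤ A) (hε : 0 ≤ ε)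
    (hJ2 : ∀ ξ, J (J ξ) = -ξ) (hJ : ‖J - JA N A‖ ≤ ε) (x : Conf N) :
    A * ‖hpart (J (vlift x))‖ ≤ (1 + ε + ε ^ 2) * ‖x‖ := by
  set z := J (vlift x)
  have hA : 0 < A := by linarith
  have h : ‖-x - A • hpart z‖ ≤ ε * ‖z‖ := by
    have := (norm_vpart_le _).trans (norm_sub_JA_apply_le hJ z)
    rwa [vpart_sub, hJ2, vpart_neg, vpart_vlift, vpart_JA] at this
  have h' := norm_le_norm_add_norm_sub (-x) (A • hpart z)
  rw [norm_smul, norm_neg, Real.norm_of_nonneg hA.le] at h'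
  calc A * ‖hpart z‖ ≤ ‖x‖ + ε * ‖z‖ := by linarith
    _ ≤ ‖x‖ + ε * ((A⁻¹ + ε) * ‖x‖) := by gcongr; exact norm_apply_vlift_le hA hJ x
    _ ≤ ‖x‖ + ε * ((1 + ε) * ‖x‖) := by gcongr; exact inv_le_one_of_one_le₀ hA1
    _ = (1 + ε + ε ^ 2) * ‖x‖ := by ring

lemma mul_dlam_apply_vlift_le (hA : 0 < A) (hε : 0 ≤ ε) (hJ2 : ∀ ξ, J (J ξ) = -ξ)
    (hJ : ‖J - JA N A‖ ≤ ε) (x : Conf N) :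
    A * dlam (J (vlift x)) (vlift x) ≤ (1 + ε + ε ^ 2) * ‖x‖ ^ 2 := by
  have hB : A * ‖hpart (J (vlift x))‖ ≤ (1 + ε + ε ^ 2) * ‖x‖ := by
    rcases le_total A 1 with hA1 | hA1
    · exact (mul_norm_hpart_apply_vlift_le_of_le_one hA hA1 hε hJ x).trans
        (mul_le_mul_of_nonneg_right (by nlinarith [sq_nonneg ε]) (norm_nonneg x))
    · exact mul_norm_hpart_apply_vlift_le_of_one_le hA1 hε hJ2 hJ x
  calc A * dlam (J (vlift x)) (vlift x) = A * -⟪hpart (J (vlift x)), x⟫ := by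
        rw [dlam_vlift_right]
    _ ≤ A * (‖hpart (J (vlift x))‖ * ‖x‖) := by
        gcongr; exact (neg_le_abs _).trans (abs_real_inner_le_norm _ _)
    _ = (A * ‖hpart (J (vlift x))‖) * ‖x‖ := by ring
    _ ≤ (1 + ε + ε ^ 2) * ‖x‖ * ‖x‖ := by gcongr
    _ = (1 + ε + ε ^ 2) * ‖x‖ ^ 2 := by ring

lemma mul_sum_norm_hpart_sq_le (hA : 0 < A) (hε : 0 ≤ ε) (hJ2 : ∀ ξ, J (J ξ) = -ξ)
    (hsymm : ∀ ξ ζ, dlam (J ξ) ζ = dlam (J ζ) ξ)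
    (hpos : ∀ ξ, 0 ≤ dlam (J ξ) ξ) (hJ : ‖J - JA N A‖ ≤ ε) (ξ : Phase N) :
    A * (‖hpart ξ‖ ^ 2 + ‖hpart (J ξ)‖ ^ 2) ≤ (1 + ε + ε ^ 2) * dlam (J ξ) ξ := by
  set S := ‖hpart ξ‖ ^ 2 + ‖hpart (J ξ)‖ ^ 2
  set K := 1 + ε + ε ^ 2
  have hCS := sq_sum_norm_hpart_sq_le hJ2 hsymm hpos ξ
  have h₁ := mul_dlam_apply_vlift_le hA hε hJ2 hJ (hpart ξ)
  have h₂ := mul_dlam_apply_vlift_le hA hε hJ2 hJ (hpart (J ξ))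
  rcases (show 0 ≤ S by positivity).eq_or_lt with hS | hS
  · rw [← hS, mul_zero]
    exact mul_nonneg (by positivity) (hpos ξ)
  refine le_of_mul_le_mul_right ?_ hS
  calc A * S * S = A * S ^ 2 := by ring
    _ ≤ A * ((dlam (J (vlift (hpart ξ))) (vlift (hpart ξ)) +
        dlam (J (vlift (hpart (J ξ)))) (vlift (hpart (J ξ)))) * dlam (J ξ) ξ) := by gcongr
    _ ≤ (K * ‖hpart ξ‖ ^ 2 + K * ‖hpart (J ξ)‖ ^ 2) * dlam (J ξ) ξ := by
      rw [← mul_assoc, mul_add]; gcongr; exact hpos ξ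
    _ = K * dlam (J ξ) ξ * S := by ring

end Perturbation

theorem uniformly_tame
    (N : ℕ) (A ε : ℝ) (hA : 0 < A) (hε : 0 < ε) (hε7 : ε < 1 / 7)
    (c : Fin N → ℝ) (hc : ∀ j, |c j| ≤ A)
    (J : Phase N →L[ℝ] Phase N)
    (hJ2 : ∀ ξ, J (J ξ) = -ξ)
    (hsymm : ∀ ξ ζ, dlam (J ξ) ζ = dlam (J ζ) ξ)
    (hposdef : ∀ ξ : Phase N, ξ ≠ 0 → 0 < dlam (J ξ) ξ)
    (hnorm : ‖J - JA N A‖ < ε) :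
    ∀ ξ : Phase N, ξ ≠ 0 →
      (1 / 4) * dlam (J ξ) ξ < dlam (J ξ) ξ + ⟪rotAct c (hpart (J ξ)), hpart ξ⟫ := by
  intro ξ hξ
  have hpos : ∀ ζ : Phase N, 0 ≤ dlam (J ζ) ζ := fun ζ => by
    rcases eq_or_ne ζ 0 with rfl | hζ
    · exact ((metricForm J).map_zero₂ 0).ge
    · exact (hposdef ζ hζ).le
  have hD := hposdef ξ hξ
  have hS := mul_sum_norm_hpart_sq_le hA hε.le hJ2 hsymm hpos hnorm.le ξ
  have hY := neg_le_inner_rotAct hA.le hc (hpart (J ξ)) (hpart ξ)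
  have hK : (1 + ε + ε ^ 2) * dlam (J ξ) ξ < 3 / 2 * dlam (J ξ) ξ := by gcongr; nlinarith
  linarith
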